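/- Let g : Y → X be a finite modification of Noetherian affine schemes centered at a closed subscheme W containing no associated point of X. Then there exists a non-zerodivisor φ ∈ O(X) with φ·O(Y) ⊆ O(X) (viewing O(X) ⊆ O(Y) ⊆ sections over X\W); consequently, if the punctual normalization of X at a point x is a finite O(X)-module then the punctual normalization of Y at the point over x is a finite module as well. -/

import Mathlib

/-!
Since `I` lies in no associated prime of the Noetherian ring `R`, and these primes are finitely
many and cover the zero divisors, prime avoidance gives a non-zerodivisor `φ₀ ∈ I`; then
`φ = φ₀ ^ n ∈ I ^ n` is the required conductor element. As `S` is finite over `R`, integrality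
over `S` and over `R` agree for elements of any `S`-algebra, so the two integral closures
coincide and finiteness over `R` passes to finiteness over `S`.
-/

theorem Ideal.exists_mem_nonZeroDivisors_of_forall_not_le_associatedPrimes {R : Type*}
    [CommRing R] [IsNoetherianRing R] {I : Ideal R}
    (hI : ∀ p ∈ associatedPrimes R R, ¬ I ≤ p) : ∃ φ ∈ I, φ ∈ nonZeroDivisors R := by
  by_contra! hzd
  obtain ⟨p, hp, hIp⟩ := (I.subset_union_prime_finite (associatedPrimes.finite R R) (f := id) 0 0
    fun _ hp _ _ ↦ hp.isPrime).1 <| by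
      simp_rw [id, biUnion_associatedPrimes_eq_compl_nonZeroDivisors]
      exact hzd
  exact hI p hp hIp

section IntegralClosure

variable (R S Q : Type*) [CommRing R] [CommRing S] [CommRing Q] [Algebra R S] [Algebra R Q]
  [Algebra S Q] [IsScalarTower R S Q] [Algebra.IsIntegral R S]

theorem integralClosure_restrictScalars_eq_of_isIntegral :
    (integralClosure S Q).restrictScalars R = integralClosure R Q := by
  ext x
  exact ⟨fun hx ↦ isIntegral_trans x hx, IsIntegral.tower_top⟩

theorem Module.Finite.integralClosure_of_isIntegral [Module.Finite R (integralClosure R Q)] :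
    Module.Finite S (integralClosure S Q) := by
  have : Module.Finite R ((integralClosure S Q).restrictScalars R) :=
    integralClosure_restrictScalars_eq_of_isIntegral R S Q ▸ ‹_›
  have : Module.Finite R (integralClosure S Q) := this
  exact Module.Finite.of_restrictScalars_finite R S _

end IntegralClosure

theorem stmt13 (R S : Type) [CommRing R] [IsNoetherianRing R] [CommRing S] [Algebra R S]
    [Module.Finite R S]
    (I : Ideal R)
    (hIass : ∀ p ∈ associatedPrimes R R, ¬ I ≤ p)
    (n : ℕ)
    (hcoker : ∀ s : S, ∀ y ∈ I ^ n, algebraMap R S y * s ∈ (algebraMap R S).range) :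
    ∃ φ ∈ nonZeroDivisors R,
      (∀ s : S, algebraMap R S φ * s ∈ (algebraMap R S).range) ∧
      (∀ (Q : Type) (_ : CommRing Q) (_ : Algebra R Q) (_ : Algebra S Q),
        ∀ (_ : IsScalarTower R S Q),
        Module.Finite R (integralClosure R Q) → Module.Finite S (integralClosure S Q)) := by
  obtain ⟨φ₀, hφ₀I, hφ₀⟩ := I.exists_mem_nonZeroDivisors_of_forall_not_le_associatedPrimes hIass
  refine ⟨φ₀ ^ n, pow_mem hφ₀ n, fun s ↦ hcoker s _ (Ideal.pow_mem_pow hφ₀I n), ?_⟩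
  intro Q _ _ _ _ _
  exact Module.Finite.integralClosure_of_isIntegral R S Q
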